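/- Let n ≥ 1, let A be an IFM of order n, let λ ∈ [0,1] and set α = (1+λ)/2. Then for every m ≥ 2 and all r, s, j, the entries in column j of the m-th power of A under the ∗ operation satisfy |(A^m)μ r j − (A^m)μ s j| ≤ α^(m−2) and |(A^m)ν r j − (A^m)ν s j| ≤ α^(m−2). -/

import Mathlib

open Filter Topology

/-- Membership scalar operation of the convex combination of max-min and
maxarithmetic mean–minarithmetic mean: `x ⊛ y = λ·min(x,y) + (1-λ)·(x+y)/2`. -/
noncomputable def starMu (lam x y : ℝ) : ℝ :=
  lam * min x y + (1 - lam) * ((x + y) / 2)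

/-- Non-membership scalar operation:
`x ⊛' y = λ·max(x,y) + (1-λ)·(x+y)/2`. -/
noncomputable def starNu (lam x y : ℝ) : ℝ :=
  lam * max x y + (1 - lam) * ((x + y) / 2)

/-- `A` (given by membership part `Amu` and non-membership part `Anu`) is an
intuitionistic fuzzy matrix. -/
def IsIFM (n : ℕ) (Amu Anu : Fin n → Fin n → ℝ) : Prop :=
  ∀ i j, 0 ≤ Amu i j ∧ 0 ≤ Anu i j ∧ Amu i j + Anu i j ≤ 1

/-- Powers of an IFM under the convex combination `∗` of the max-min and the
maxarithmetic mean–minarithmetic mean operations: `A^1 = A`,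
`A^(k+1) = A^k ∗ A` with
`(X ∗ A)μ i j = max_t (Xμ i t ⊛ Aμ t j)` and
`(X ∗ A)ν i j = min_t (Xν i t ⊛' Aν t j)`.
(The value at `0` is irrelevant; it is set to `A`.) -/
noncomputable def sPow (n : ℕ) (lam : ℝ) (Amu Anu : Fin n → Fin n → ℝ) :
    ℕ → (Fin n → Fin n → ℝ) × (Fin n → Fin n → ℝ)
  | 0 => (Amu, Anu)
  | 1 => (Amu, Anu)
  | m + 2 =>
    let X := sPow n lam Amu Anu (m + 1)
    (fun i j => ⨆ t : Fin n, starMu lam (X.1 i t) (Amu t j),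
     fun i j => ⨅ t : Fin n, starNu lam (X.2 i t) (Anu t j))

/-!
For fixed `y`, the maps `x ↦ x ⊛ y` and `x ↦ x ⊛' y` are `α`-Lipschitz: `min`/`max` are
`1`-Lipschitz in `x` and the mean is `1/2`-Lipschitz, so the convex combination has constant
`λ + (1 - λ)/2 = α`. Finite `max`es or `min`s of two families that are pointwise within `c` of each
other are again within `c`. Hence passing from `A^k` to `A^k ∗ A` shrinks the spread of every
column by the factor `α`. Both operations keep entries in `[0, 1]`, so the spread of `A²` is at
most `1`.
-/

open Set

section Scalar

variable {lam : ℝ}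

lemma abs_mul_add_half_mul_le (hlam : lam ∈ Icc (0 : ℝ) 1) {u d : ℝ} (hu : |u| ≤ |d|) :
    |lam * u + (1 - lam) / 2 * d| ≤ (1 + lam) / 2 * |d| := by
  obtain ⟨h0, h1⟩ := hlam
  calc |lam * u + (1 - lam) / 2 * d| ≤ |lam * u| + |(1 - lam) / 2 * d| := abs_add_le _ _
    _ = lam * |u| + (1 - lam) / 2 * |d| := by
      rw [abs_mul, abs_mul, abs_of_nonneg h0, abs_of_nonneg (by linarith : 0 ≤ (1 - lam) / 2)]
    _ ≤ (1 + lam) / 2 * |d| := by nlinarith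

lemma abs_starMu_sub_starMu_le (hlam : lam ∈ Icc (0 : ℝ) 1) (x x' y : ℝ) :
    |starMu lam x y - starMu lam x' y| ≤ (1 + lam) / 2 * |x - x'| := by
  have hsplit : starMu lam x y - starMu lam x' y
      = lam * (min x y - min x' y) + (1 - lam) / 2 * (x - x') := by
    unfold starMu; ring
  rw [hsplit]
  exact abs_mul_add_half_mul_le hlam (abs_min_sub_min_le_max x y x' y |>.trans (by simp))

lemma abs_starNu_sub_starNu_le (hlam : lam ∈ Icc (0 : ℝ) 1) (x x' y : ℝ) :
    |starNu lam x y - starNu lam x' y| ≤ (1 + lam) / 2 * |x - x'| := by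
  have hsplit : starNu lam x y - starNu lam x' y
      = lam * (max x y - max x' y) + (1 - lam) / 2 * (x - x') := by
    unfold starNu; ring
  rw [hsplit]
  exact abs_mul_add_half_mul_le hlam (abs_max_sub_max_le_abs x x' y)

lemma starMu_mem_Icc (hlam : lam ∈ Icc (0 : ℝ) 1) {a b x y : ℝ} (hx : x ∈ Icc a b)
    (hy : y ∈ Icc a b) : starMu lam x y ∈ Icc a b := by
  obtain ⟨h0, h1⟩ := hlam
  have hmin : min x y ∈ Icc a b := ⟨le_min hx.1 hy.1, (min_le_left x y).trans hx.2⟩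
  unfold starMu
  constructor <;> nlinarith [hx.1, hx.2, hy.1, hy.2, hmin.1, hmin.2]

lemma starNu_mem_Icc (hlam : lam ∈ Icc (0 : ℝ) 1) {a b x y : ℝ} (hx : x ∈ Icc a b)
    (hy : y ∈ Icc a b) : starNu lam x y ∈ Icc a b := by
  obtain ⟨h0, h1⟩ := hlam
  have hmax : max x y ∈ Icc a b := ⟨hx.1.trans (le_max_left x y), max_le hx.2 hy.2⟩
  unfold starNu
  constructor <;> nlinarith [hx.1, hx.2, hy.1, hy.2, hmax.1, hmax.2]

end Scalar

section FiniteExtrema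

variable {ι : Type*} [Finite ι] [Nonempty ι] {f g : ι → ℝ} {c : ℝ}

lemma ciSup_sub_ciSup_le (h : ∀ t, f t - g t ≤ c) : (⨆ t, f t) - ⨆ t, g t ≤ c := by
  obtain ⟨i, hi⟩ := exists_eq_ciSup_of_finite (f := f)
  linarith [h i, le_ciSup (finite_range g).bddAbove i]

lemma ciInf_sub_ciInf_le (h : ∀ t, f t - g t ≤ c) : (⨅ t, f t) - ⨅ t, g t ≤ c := by
  obtain ⟨i, hi⟩ := exists_eq_ciInf_of_finite (f := g)
  linarith [h i, ciInf_le (finite_range f).bddBelow i]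

lemma abs_ciSup_sub_ciSup_le (h : ∀ t, |f t - g t| ≤ c) : |(⨆ t, f t) - ⨆ t, g t| ≤ c :=
  abs_sub_le_iff.2 ⟨ciSup_sub_ciSup_le fun t => (abs_sub_le_iff.1 (h t)).1,
    ciSup_sub_ciSup_le fun t => (abs_sub_le_iff.1 (h t)).2⟩

lemma abs_ciInf_sub_ciInf_le (h : ∀ t, |f t - g t| ≤ c) : |(⨅ t, f t) - ⨅ t, g t| ≤ c :=
  abs_sub_le_iff.2 ⟨ciInf_sub_ciInf_le fun t => (abs_sub_le_iff.1 (h t)).1,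
    ciInf_sub_ciInf_le fun t => (abs_sub_le_iff.1 (h t)).2⟩

lemma ciSup_mem_of_forall_mem {s : Set ℝ} (h : ∀ t, f t ∈ s) : ⨆ t, f t ∈ s := by
  obtain ⟨i, hi⟩ := exists_eq_ciSup_of_finite (f := f)
  exact hi ▸ h i

lemma ciInf_mem_of_forall_mem {s : Set ℝ} (h : ∀ t, f t ∈ s) : ⨅ t, f t ∈ s := by
  obtain ⟨i, hi⟩ := exists_eq_ciInf_of_finite (f := f)
  exact hi ▸ h i

end FiniteExtrema

section Powers

variable {n : ℕ} {lam : ℝ} {Amu Anu : Fin n → Fin n → ℝ}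

lemma IsIFM.mem_Icc (hA : IsIFM n Amu Anu) (i j : Fin n) :
    Amu i j ∈ Icc (0 : ℝ) 1 ∧ Anu i j ∈ Icc (0 : ℝ) 1 := by
  obtain ⟨hmu, hnu, hsum⟩ := hA i j
  exact ⟨⟨hmu, by linarith⟩, ⟨hnu, by linarith⟩⟩

lemma sPow_add_two_fst (m : ℕ) (i j : Fin n) :
    (sPow n lam Amu Anu (m + 2)).1 i j
      = ⨆ t, starMu lam ((sPow n lam Amu Anu (m + 1)).1 i t) (Amu t j) := rfl

lemma sPow_add_two_snd (m : ℕ) (i j : Fin n) :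
    (sPow n lam Amu Anu (m + 2)).2 i j
      = ⨅ t, starNu lam ((sPow n lam Amu Anu (m + 1)).2 i t) (Anu t j) := rfl

lemma sPow_mem_Icc (hA : IsIFM n Amu Anu) (hlam : lam ∈ Icc (0 : ℝ) 1) :
    ∀ m i j, (sPow n lam Amu Anu m).1 i j ∈ Icc (0 : ℝ) 1 ∧
      (sPow n lam Amu Anu m).2 i j ∈ Icc (0 : ℝ) 1
  | 0, i, j | 1, i, j => hA.mem_Icc i j
  | m + 2, i, j => by
    have : Nonempty (Fin n) := ⟨i⟩
    rw [sPow_add_two_fst, sPow_add_two_snd]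
    exact ⟨ciSup_mem_of_forall_mem fun t => starMu_mem_Icc hlam
        (sPow_mem_Icc hA hlam (m + 1) i t).1 (hA.mem_Icc t j).1,
      ciInf_mem_of_forall_mem fun t => starNu_mem_Icc hlam
        (sPow_mem_Icc hA hlam (m + 1) i t).2 (hA.mem_Icc t j).2⟩

lemma abs_sPow_add_two_sub_le (hA : IsIFM n Amu Anu) (hlam : lam ∈ Icc (0 : ℝ) 1) (k : ℕ)
    (r s j : Fin n) :
    |(sPow n lam Amu Anu (k + 2)).1 r j - (sPow n lam Amu Anu (k + 2)).1 s j| ≤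
        ((1 + lam) / 2) ^ k ∧
      |(sPow n lam Amu Anu (k + 2)).2 r j - (sPow n lam Amu Anu (k + 2)).2 s j| ≤
        ((1 + lam) / 2) ^ k := by
  induction k generalizing r s j with
  | zero =>
    obtain ⟨hr_mu, hr_nu⟩ := sPow_mem_Icc hA hlam 2 r j
    obtain ⟨hs_mu, hs_nu⟩ := sPow_mem_Icc hA hlam 2 s j
    rw [pow_zero, ← Real.dist_eq, ← Real.dist_eq]
    exact ⟨Real.dist_le_of_mem_Icc_01 hr_mu hs_mu, Real.dist_le_of_mem_Icc_01 hr_nu hs_nu⟩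
  | succ k ih =>
    have : Nonempty (Fin n) := ⟨r⟩
    have hα : 0 ≤ (1 + lam) / 2 := by linarith [hlam.1]
    rw [sPow_add_two_fst, sPow_add_two_fst, sPow_add_two_snd, sPow_add_two_snd, pow_succ']
    exact ⟨abs_ciSup_sub_ciSup_le fun t => (abs_starMu_sub_starMu_le hlam _ _ _).trans
        (mul_le_mul_of_nonneg_left (ih r s t).1 hα),
      abs_ciInf_sub_ciInf_le fun t => (abs_starNu_sub_starNu_le hlam _ _ _).trans
        (mul_le_mul_of_nonneg_left (ih r s t).2 hα)⟩

end Powers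

theorem sPow_column_close_general (n : ℕ)
    (Amu Anu : Fin n → Fin n → ℝ) (hA : IsIFM n Amu Anu)
    (lam : ℝ) (hlam : lam ∈ Set.Icc (0 : ℝ) 1)
    (alpha : ℝ) (halpha : alpha = (1 + lam) / 2)
    (m : ℕ) (hm : 2 ≤ m) (r s j : Fin n) :
    |(sPow n lam Amu Anu m).1 r j - (sPow n lam Amu Anu m).1 s j| ≤
        alpha ^ (m - 2) ∧
      |(sPow n lam Amu Anu m).2 r j - (sPow n lam Amu Anu m).2 s j| ≤
        alpha ^ (m - 2) := by
  obtain ⟨k, rfl⟩ : ∃ k, m = k + 2 := ⟨m - 2, by omega⟩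
  subst halpha
  simpa using abs_sPow_add_two_sub_le hA hlam k r s j

/-- Entries in a fixed column of the `m`-th power under the `∗` operation
differ by at most `α^(m-2)`, where `α = (1+λ)/2`. -/
theorem sPow_column_close (n : ℕ) (hn : 1 ≤ n)
    (Amu Anu : Fin n → Fin n → ℝ) (hA : IsIFM n Amu Anu)
    (lam : ℝ) (hlam : lam ∈ Set.Icc (0 : ℝ) 1)
    (alpha : ℝ) (halpha : alpha = (1 + lam) / 2)
    (m : ℕ) (hm : 2 ≤ m) (r s j : Fin n) :
    |(sPow n lam Amu Anu m).1 r j - (sPow n lam Amu Anu m).1 s j| ≤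
        alpha ^ (m - 2) ∧
      |(sPow n lam Amu Anu m).2 r j - (sPow n lam Amu Anu m).2 s j| ≤
        alpha ^ (m - 2) :=
  sPow_column_close_general n Amu Anu hA lam hlam alpha halpha m hm r s j
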